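/- arXiv:1904.13088 — 3 statements merged into one kernel-verified Lean document; each statement's English description precedes it below -/
import Mathlib

section
/- The strong-dependently-precedes relation SDP is contained in WCP: every pair of events ordered by SDP is also ordered by WCP. Consequently every WCP-race is an SDP-race (the race sets detected by SDP are a superset of those detected by WCP). -/
/-- Operations an event can perform. -/
inductive Op where
  | write : ℕ → Op
  | read : ℕ → Op
  | acquire : ℕ → Op
  | release : ℕ → Op
  | branch : Op
  deriving DecidableEq

/-- An event of an execution trace: a unique identifier, a thread identifier, and an operation. -/
structure Event where
  id : ℕ
  tid : ℕ
  op : Op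
  deriving DecidableEq

/-- An execution trace is a finite sequence of events. -/
abbrev Trace := List Event

/-- Trace order: `e1` occurs strictly before `e2` in `tr`. -/
def trOrder (tr : Trace) (e1 e2 : Event) : Prop :=
  ∃ i j : Fin tr.length, i < j ∧ tr.get i = e1 ∧ tr.get j = e2

/-- Program order: trace order restricted to events of the same thread. -/
def PO (tr : Trace) (e1 e2 : Event) : Prop :=
  trOrder tr e1 e2 ∧ e1.tid = e2.tid

/-- One step of the lock-state machine: which thread holds each lock. -/
def lockStep (h : ℕ → Option ℕ) (e : Event) : ℕ → Option ℕ :=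
  match e.op with
  | Op.acquire m => fun l => if l = m then some e.tid else h l
  | Op.release m => fun l => if l = m then none else h l
  | _ => h

/-- Which thread (if any) holds each lock after executing all of `tr`. -/
def heldAfter (tr : Trace) : ℕ → Option ℕ :=
  tr.foldl lockStep (fun _ => none)

/-- Well-formedness: a thread may only acquire an unheld lock and
may only release a lock that it currently holds. -/
def WellFormed (tr : Trace) : Prop :=
  ∀ p e s, tr = p ++ e :: s →
    (∀ m, e.op = Op.acquire m → heldAfter p m = none) ∧
    (∀ m, e.op = Op.release m → heldAfter p m = some e.tid)

/-- `r` is the release ending the critical section started by acquire `a` in `tr`: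
the first release of the same lock after `a`, by the same thread. -/
def MatchingRelease (tr : Trace) (a r : Event) : Prop :=
  ∃ m, a.op = Op.acquire m ∧ r.op = Op.release m ∧ r.tid = a.tid ∧ trOrder tr a r ∧
    ∀ e, e.op = Op.release m → trOrder tr a e → trOrder tr e r → False

def isRead (e : Event) : Prop := ∃ x, e.op = Op.read x
def isWrite (e : Event) : Prop := ∃ x, e.op = Op.write x
def isAccess (e : Event) (x : ℕ) : Prop := e.op = Op.write x ∨ e.op = Op.read x

/-- Two events conflict: same variable, different threads, at least one write. -/
def Conflicts (e1 e2 : Event) : Prop :=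
  ∃ x, isAccess e1 x ∧ isAccess e2 x ∧ e1.tid ≠ e2.tid ∧
    (e1.op = Op.write x ∨ e2.op = Op.write x)

/-- Happens-before: the smallest transitive relation containing program order and
ordering every release of a lock to every later acquire of the same lock. -/
inductive HB (tr : Trace) : Event → Event → Prop where
  | po : ∀ e1 e2, PO tr e1 e2 → HB tr e1 e2
  | relacq : ∀ r a m, r.op = Op.release m → a.op = Op.acquire m → trOrder tr r a →
      HB tr r a
  | trans : ∀ e1 e2 e3, HB tr e1 e2 → HB tr e2 e3 → HB tr e1 e3

/-- `e` belongs to the critical section ended by release `r`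
(including the bounding acquire and release). -/
def InCS (tr : Trace) (r e : Event) : Prop :=
  ∃ a, MatchingRelease tr a r ∧
    (e = a ∨ e = r ∨ (trOrder tr a e ∧ trOrder tr e r ∧ e.tid = a.tid))

/-- `w` is the last writer of read `r` in trace `tr`. -/
def LastWr (tr : Trace) (r w : Event) : Prop :=
  ∃ x, r.op = Op.read x ∧ w.op = Op.write x ∧ trOrder tr w r ∧
    ∀ w', w'.op = Op.write x → ¬ (trOrder tr w w' ∧ trOrder tr w' r)

/-- Causal reads with respect to observed trace `tr`, branch-dependence `dep`,
and the set `S` of events of a candidate reordered trace: a read is causal if some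
branch in `S` PO-follows it and depends on it, or (inductively) its value flows to
a same-thread later write in `S` that is the last writer of a causal read. -/
inductive CausalRead (tr : Trace) (dep : Event → Event → Prop) (S : Event → Prop) :
    Event → Prop where
  | branch : ∀ e b, isRead e → S b → b.op = Op.branch → PO tr e b → dep b e →
      CausalRead tr dep S e
  | flow : ∀ e w r, isRead e → S w → isWrite w → PO tr e w → LastWr tr r w →
      CausalRead tr dep S r → CausalRead tr dep S e

/-- `tr'` is a predictable trace of `tr`: it contains only events of `tr` and
satisfies the PO, last-writer (LW), and lock-semantics (LS) rules. -/
structure Predictable (dep : Event → Event → Prop) (tr tr' : Trace) : Prop where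
  sub : ∀ e ∈ tr', e ∈ tr
  po_rule : ∀ e1 e2, PO tr e1 e2 → trOrder tr' e1 e2 ∨ e2 ∉ tr'
  lw_rule : ∀ e, e ∈ tr' → CausalRead tr dep (fun x => x ∈ tr') e →
      ∀ w, LastWr tr' e w ↔ LastWr tr e w
  ls_rule : ∀ a1 a2 m, a1.op = Op.acquire m → a2.op = Op.acquire m →
      trOrder tr' a1 a2 →
      ∃ r, MatchingRelease tr a1 r ∧ trOrder tr' a1 r ∧ trOrder tr' r a2

/-- Lock `m` is held at event `e` by its executing thread. -/
def HeldAt (tr : Trace) (e : Event) (m : ℕ) : Prop :=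
  ∃ a r, a.op = Op.acquire m ∧ a.tid = e.tid ∧ MatchingRelease tr a r ∧
    trOrder tr a e ∧ trOrder tr e r

/-- The locksets of `e1` and `e2` are disjoint. -/
def NoCommonLock (tr : Trace) (e1 e2 : Event) : Prop :=
  ∀ m, ¬ (HeldAt tr e1 m ∧ HeldAt tr e2 m)

/-- `e1` and `e2` are consecutive in `tr` (with `e1` first). -/
def Consecutive (tr : Trace) (e1 e2 : Event) : Prop :=
  trOrder tr e1 e2 ∧ ¬ ∃ e, trOrder tr e1 e ∧ trOrder tr e e2

/-- Weak-causally-precedes. -/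
inductive WCP (tr : Trace) : Event → Event → Prop where
  | ccs : ∀ r1 r2 e1 e2 m, r1.op = Op.release m → r2.op = Op.release m →
      trOrder tr r1 r2 → InCS tr r1 e1 → InCS tr r2 e2 → Conflicts e1 e2 →
      WCP tr r1 e2
  | hb_left : ∀ e1 e2 e3, HB tr e1 e2 → WCP tr e2 e3 → WCP tr e1 e3
  | hb_right : ∀ e1 e2 e3, WCP tr e1 e2 → HB tr e2 e3 → WCP tr e1 e3
  | acqrel : ∀ a r r' m, a.op = Op.acquire m → r.op = Op.release m →
      WCP tr a r → MatchingRelease tr a r' → WCP tr r' r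
  | trans : ∀ e1 e2 e3, WCP tr e1 e2 → WCP tr e2 e3 → WCP tr e1 e3

/-- Strong-dependently-precedes. -/
inductive SDP (tr : Trace) : Event → Event → Prop where
  | ccs : ∀ r1 r2 e1 e2 m, r1.op = Op.release m → r2.op = Op.release m →
      trOrder tr r1 r2 → InCS tr r1 e1 → InCS tr r2 e2 → Conflicts e1 e2 →
      (isRead e1 ∨ isRead e2) → SDP tr r1 e2
  | wwr : ∀ r1 r2 e1 e2 e3 m x, r1.op = Op.release m → r2.op = Op.release m →
      trOrder tr r1 r2 → InCS tr r1 e1 → InCS tr r2 e2 →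
      e1.op = Op.write x → e2.op = Op.write x → e1.tid ≠ e2.tid →
      e3.op = Op.read x → PO tr e2 e3 → SDP tr r1 e3
  | hb_left : ∀ e1 e2 e3, HB tr e1 e2 → SDP tr e2 e3 → SDP tr e1 e3
  | hb_right : ∀ e1 e2 e3, SDP tr e1 e2 → HB tr e2 e3 → SDP tr e1 e3
  | acqrel : ∀ a r r' m, a.op = Op.acquire m → r.op = Op.release m →
      SDP tr a r → MatchingRelease tr a r' → SDP tr r' r
  | trans : ∀ e1 e2 e3, SDP tr e1 e2 → SDP tr e2 e3 → SDP tr e1 e3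

/-- Weak-doesn't-commute (DC). -/
inductive DC (tr : Trace) : Event → Event → Prop where
  | ccs : ∀ r1 r2 e1 e2 m, r1.op = Op.release m → r2.op = Op.release m →
      trOrder tr r1 r2 → InCS tr r1 e1 → InCS tr r2 e2 → Conflicts e1 e2 →
      DC tr r1 e2
  | po : ∀ e1 e2, PO tr e1 e2 → DC tr e1 e2
  | acqrel : ∀ a r r' m, a.op = Op.acquire m → r.op = Op.release m →
      DC tr a r → MatchingRelease tr a r' → DC tr r' r
  | trans : ∀ e1 e2 e3, DC tr e1 e2 → DC tr e2 e3 → DC tr e1 e3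

/-- Weak-dependently-precedes, parameterized by branch dependence `dep b r`. -/
inductive WDP (tr : Trace) (dep : Event → Event → Prop) : Event → Event → Prop where
  | wrbr : ∀ r1 r2 e1 e2 b m, r1.op = Op.release m → r2.op = Op.release m →
      trOrder tr r1 r2 → InCS tr r1 e1 → InCS tr r2 e2 → LastWr tr e2 e1 →
      b.op = Op.branch → PO tr e2 b → dep b e2 → WDP tr dep r1 b
  | po : ∀ e1 e2, PO tr e1 e2 → WDP tr dep e1 e2
  | acqrel : ∀ a r r' m, a.op = Op.acquire m → r.op = Op.release m →
      WDP tr dep a r → MatchingRelease tr a r' → WDP tr dep r' r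
  | trans : ∀ e1 e2 e3, WDP tr dep e1 e2 → WDP tr dep e2 e3 → WDP tr dep e1 e3

def WCPRace (tr : Trace) (e1 e2 : Event) : Prop :=
  trOrder tr e1 e2 ∧ Conflicts e1 e2 ∧ ¬ (WCP tr e1 e2 ∨ PO tr e1 e2) ∧
    NoCommonLock tr e1 e2

def SDPRace (tr : Trace) (e1 e2 : Event) : Prop :=
  trOrder tr e1 e2 ∧ Conflicts e1 e2 ∧ ¬ (SDP tr e1 e2 ∨ PO tr e1 e2) ∧
    NoCommonLock tr e1 e2

def DCRace (tr : Trace) (e1 e2 : Event) : Prop :=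
  trOrder tr e1 e2 ∧ Conflicts e1 e2 ∧ ¬ DC tr e1 e2

def WDPRace (tr : Trace) (dep : Event → Event → Prop) (e1 e2 : Event) : Prop :=
  trOrder tr e1 e2 ∧ Conflicts e1 e2 ∧ ¬ WDP tr dep e1 e2 ∧ NoCommonLock tr e1 e2

/-- `tr` has a predictable race: some predictable trace has two conflicting
events consecutive. -/
def HasPredRace (dep : Event → Event → Prop) (tr : Trace) : Prop :=
  ∃ tr' e1 e2, Predictable dep tr tr' ∧ Conflicts e1 e2 ∧ Consecutive tr' e1 e2

/-- `tr'` exhibits a deadlock with respect to `tr`: a cycle of at least two threads,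
each holding a lock at the end of `tr'` while its next event in `tr` is an acquire of
the next thread's lock. -/
def Deadlocked (tr tr' : Trace) : Prop :=
  ∃ n, 2 ≤ n ∧ ∃ t m : ℕ → ℕ,
    (∀ i j, i < n → j < n → t i = t j → i = j) ∧
    ∀ i < n,
      heldAfter tr' (m i) = some (t i) ∧
      ∃ a ∈ tr, a ∉ tr' ∧ a.tid = t i ∧ a.op = Op.acquire (m ((i + 1) % n)) ∧
        ∀ e ∈ tr, e.tid = t i → trOrder tr e a → e ∈ tr'

/-- `tr` has a predictable deadlock. -/
def HasPredDeadlock (dep : Event → Event → Prop) (tr : Trace) : Prop :=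
  ∃ tr', Predictable dep tr tr' ∧ Deadlocked tr tr'
/-- SDP is contained in WCP; consequently every WCP-race is an SDP-race. -/
theorem stmt8 (tr : Trace) (hwf : WellFormed tr) (hnd : tr.Nodup) :
    (∀ e1 e2, SDP tr e1 e2 → WCP tr e1 e2) ∧
    (∀ e1 e2, WCPRace tr e1 e2 → SDPRace tr e1 e2) := by
  have key : ∀ e1 e2, SDP tr e1 e2 → WCP tr e1 e2 := by
    intro e1 e2 h
    induction h with
    | ccs r1 r2 a b m h1 h2 h3 h4 h5 h6 _ => exact WCP.ccs r1 r2 a b m h1 h2 h3 h4 h5 h6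
    | wwr r1 r2 a b c m x h1 h2 h3 h4 h5 hw1 hw2 htid hr hpo =>
        exact WCP.hb_right r1 b c
          (WCP.ccs r1 r2 a b m h1 h2 h3 h4 h5
            ⟨x, Or.inl hw1, Or.inl hw2, htid, Or.inl hw1⟩)
          (HB.po b c hpo)
    | hb_left a b c h1 _ ih => exact WCP.hb_left a b c h1 ih
    | hb_right a b c _ h2 ih => exact WCP.hb_right a b c ih h2
    | acqrel a r r' m h1 h2 _ h4 ih => exact WCP.acqrel a r r' m h1 h2 ih h4
    | trans a b c _ _ ih1 ih2 => exact WCP.trans a b c ih1 ih2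
  refine ⟨key, ?_⟩
  rintro e1 e2 ⟨h1, h2, h3, h4⟩
  exact ⟨h1, h2, fun h => h3 (h.imp (key e1 e2) id), h4⟩
end

section
/- The weak-dependently-precedes relation WDP is contained in the weak-doesn't-commute relation DC: if e WDP e' then e DC e'. Consequently every DC-race is a WDP-race. -/
/-!
A WDP edge from rule (a) goes from a release `r1` to a branch `b` through a read `e2` in a
later critical section on the same lock, whose last writer `e1` lies in the critical section of
`r1`. It factors as a DC edge `r1 → e2` followed by program order `e2 → b`: if `e1` and `e2`
are in different threads they conflict, so rule (a) of DC applies; otherwise `r1` precedes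
`e2` in the same thread. For the race part, two conflicting events holding a common lock lie
in critical sections of that lock whose releases occur in the same order as the events, so DC
orders them by program order and rule (a).
-/

section TraceOrder

variable {tr : Trace} {e1 e2 e3 : Event}

lemma trOrder_mem_left (h : trOrder tr e1 e2) : e1 ∈ tr := by
  obtain ⟨i, -, -, rfl, -⟩ := h
  exact tr.get_mem i

lemma trOrder_mem_right (h : trOrder tr e1 e2) : e2 ∈ tr := by
  obtain ⟨-, j, -, -, rfl⟩ := h
  exact tr.get_mem j

lemma trOrder_trans (hnd : tr.Nodup) (h12 : trOrder tr e1 e2) (h23 : trOrder tr e2 e3) :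
    trOrder tr e1 e3 := by
  obtain ⟨i, j, hij, rfl, rfl⟩ := h12
  obtain ⟨k, l, hkl, hk, rfl⟩ := h23
  obtain rfl : k = j := List.nodup_iff_injective_get.mp hnd hk
  exact ⟨i, l, hij.trans hkl, rfl, rfl⟩

lemma trOrder_total (h1 : e1 ∈ tr) (h2 : e2 ∈ tr) (hne : e1 ≠ e2) :
    trOrder tr e1 e2 ∨ trOrder tr e2 e1 := by
  obtain ⟨i, rfl⟩ := List.mem_iff_get.mp h1
  obtain ⟨j, rfl⟩ := List.mem_iff_get.mp h2
  rcases lt_trichotomy i j with h | rfl | h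
  · exact .inl ⟨i, j, h, rfl, rfl⟩
  · exact absurd rfl hne
  · exact .inr ⟨j, i, h, rfl, rfl⟩

end TraceOrder

lemma Conflicts.tid_ne {e1 e2 : Event} (h : Conflicts e1 e2) : e1.tid ≠ e2.tid := by
  obtain ⟨-, -, -, h, -⟩ := h
  exact h

namespace MatchingRelease

variable {tr : Trace} {a r : Event} {m : ℕ}

lemma tid_eq (h : MatchingRelease tr a r) : r.tid = a.tid := by
  obtain ⟨-, -, -, h, -⟩ := h
  exact h

lemma release_op (h : MatchingRelease tr a r) (ha : a.op = Op.acquire m) :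
    r.op = Op.release m := by
  obtain ⟨m', ha', hr, -⟩ := h
  rwa [Op.acquire.inj (ha.symm.trans ha')]

lemma not_release_between (h : MatchingRelease tr a r) (ha : a.op = Op.acquire m) {r' : Event}
    (hr' : r'.op = Op.release m) (har' : trOrder tr a r') (hr'r : trOrder tr r' r) : False := by
  obtain ⟨m', ha', -, -, -, hmin⟩ := h
  rw [ha', Op.acquire.injEq] at ha
  exact hmin r' (ha ▸ hr') har' hr'r

lemma trOrder_acquire_of_trOrder_release (h : MatchingRelease tr a r)
    {r₀ : Event} (hr₀ : r₀.op = Op.release m) (hr : r.op = Op.release m)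
    (hr₀r : trOrder tr r₀ r) : trOrder tr r₀ a := by
  obtain ⟨m', ha, hr', -, har, -⟩ := id h
  rw [hr, Op.release.injEq] at hr'
  subst hr'
  have hne : r₀ ≠ a := fun h => by rw [h, ha] at hr₀; exact Op.noConfusion hr₀
  exact (trOrder_total (trOrder_mem_left hr₀r) (trOrder_mem_left har) hne).resolve_right
    fun har₀ => h.not_release_between ha hr₀ har₀ hr₀r

end MatchingRelease

namespace InCS

variable {tr : Trace} {r e : Event}

lemma tid_eq (h : InCS tr r e) : e.tid = r.tid := by
  obtain ⟨a, hmr, rfl | rfl | ⟨-, -, ht⟩⟩ := h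
  · exact hmr.tid_eq.symm
  · rfl
  · rw [ht, hmr.tid_eq]

lemma trOrder_of_trOrder_release (hnd : tr.Nodup) (h : InCS tr r e) {r₀ : Event} {m : ℕ}
    (hr₀ : r₀.op = Op.release m) (hr : r.op = Op.release m) (hr₀r : trOrder tr r₀ r) :
    trOrder tr r₀ e := by
  obtain ⟨a, hmr, rfl | rfl | ⟨hae, -, -⟩⟩ := h
  · exact hmr.trOrder_acquire_of_trOrder_release hr₀ hr hr₀r
  · exact hr₀r
  · exact trOrder_trans hnd (hmr.trOrder_acquire_of_trOrder_release hr₀ hr hr₀r) hae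

end InCS

section DC

variable {tr : Trace} {r1 r2 e1 e2 : Event} {m : ℕ}

lemma DC.of_lastWr_inCS (hnd : tr.Nodup) (hr1 : r1.op = Op.release m)
    (hr2 : r2.op = Op.release m) (h12 : trOrder tr r1 r2) (hcs1 : InCS tr r1 e1)
    (hcs2 : InCS tr r2 e2) (hlw : LastWr tr e2 e1) : DC tr r1 e2 := by
  obtain ⟨x, he2, he1, -, -⟩ := hlw
  by_cases ht : e1.tid = e2.tid
  · exact DC.po _ _ ⟨hcs2.trOrder_of_trOrder_release hnd hr1 hr2 h12, hcs1.tid_eq ▸ ht⟩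
  · exact DC.ccs r1 r2 e1 e2 m hr1 hr2 h12 hcs1 hcs2 ⟨x, .inl he1, .inr he2, ht, .inl he1⟩

lemma DC.of_heldAt (hnd : tr.Nodup) (h12 : trOrder tr e1 e2) (hc : Conflicts e1 e2)
    (h1 : HeldAt tr e1 m) (h2 : HeldAt tr e2 m) : DC tr e1 e2 := by
  obtain ⟨a1, r1, ha1, ht1, hmr1, hae1, her1⟩ := h1
  obtain ⟨a2, r2, ha2, ht2, hmr2, hae2, her2⟩ := h2
  have hr1 := hmr1.release_op ha1
  have hr2 := hmr2.release_op ha2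
  have hr12 : trOrder tr r1 r2 := by
    have hne : r1 ≠ r2 := fun h =>
      hc.tid_ne (by rw [← ht1, ← hmr1.tid_eq, h, hmr2.tid_eq, ht2])
    refine (trOrder_total (trOrder_mem_right her1) (trOrder_mem_right her2) hne).resolve_right
      fun hr21 => hmr1.not_release_between ha1 hr2 ?_ hr21
    exact trOrder_trans hnd (trOrder_trans hnd hae1 h12) her2
  have hcs1 : InCS tr r1 e1 := ⟨a1, hmr1, .inr (.inr ⟨hae1, her1, ht1.symm⟩)⟩
  have hcs2 : InCS tr r2 e2 := ⟨a2, hmr2, .inr (.inr ⟨hae2, her2, ht2.symm⟩)⟩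
  exact DC.trans _ _ _ (DC.po _ _ ⟨her1, hcs1.tid_eq⟩)
    (DC.ccs r1 r2 e1 e2 m hr1 hr2 hr12 hcs1 hcs2 hc)

end DC

theorem WDP.toDC {tr : Trace} (hnd : tr.Nodup) {dep : Event → Event → Prop} {e1 e2 : Event}
    (h : WDP tr dep e1 e2) : DC tr e1 e2 := by
  induction h with
  | wrbr r1 r2 e1 e2 b m hr1 hr2 h12 hcs1 hcs2 hlw _ hpo _ =>
    exact DC.trans _ _ _ (DC.of_lastWr_inCS hnd hr1 hr2 h12 hcs1 hcs2 hlw) (DC.po _ _ hpo)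
  | po e1 e2 h => exact DC.po _ _ h
  | acqrel a r r' m ha hr _ hmr ih => exact DC.acqrel a r r' m ha hr ih hmr
  | trans e1 e2 e3 _ _ ih1 ih2 => exact DC.trans _ _ _ ih1 ih2

theorem stmt9_general (tr : Trace) (hnd : tr.Nodup)
    (dep : Event → Event → Prop) :
    (∀ e1 e2, WDP tr dep e1 e2 → DC tr e1 e2) ∧
    (∀ e1 e2, DCRace tr e1 e2 → WDPRace tr dep e1 e2) := by
  refine ⟨fun _ _ => WDP.toDC hnd, ?_⟩
  rintro e1 e2 ⟨h12, hc, hndc⟩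
  exact ⟨h12, hc, fun h => hndc (WDP.toDC hnd h),
    fun _ ⟨h1, h2⟩ => hndc (DC.of_heldAt hnd h12 hc h1 h2)⟩

/-- WDP is contained in DC; consequently every DC-race is a WDP-race. -/
theorem stmt9 (tr : Trace) (hwf : WellFormed tr) (hnd : tr.Nodup)
    (dep : Event → Event → Prop) :
    (∀ e1 e2, WDP tr dep e1 e2 → DC tr e1 e2) ∧
    (∀ e1 e2, DCRace tr e1 e2 → WDPRace tr dep e1 e2) :=
  stmt9_general tr hnd dep
end

section
/- For the base case of WDP-distance 0 via conflicting-critical-section ordering: suppose r1 <_tr r2 are releases on the same lock, e ∈ CS(r1) is a write that is the last writer in tr of a read e' ∈ CS(r2), and b is a branch with e' <_PO b and brDepsOn(b, e'). Then any predictable trace tr' of tr containing b must contain both r1 and the acquire matching r1 before e', and in particular must satisfy lastwr(e', tr') = lastwr(e', tr); hence no predictable trace can place b while reordering r1 after b or omitting r1. -/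
/-
The branch `b` makes the read `e'` causal, so the LW rule keeps `e` as its last writer in `tr'`;
hence `e`, and with it the acquire `a1` of `CS(r1)`, precedes `e'` in `tr'`. By the LS rule the
two critical sections on `m` do not overlap in `tr'`, and `CS(r2)` cannot come first: program
order puts `e'` before `r2`, while `a1` precedes `e'`. So `r1` precedes the acquire of `CS(r2)`,
which precedes `e'`.
-/

section TraceOrder

variable {tr : Trace} {x y z : Event}

lemma trOrder.mem_left (h : trOrder tr x y) : x ∈ tr := by
  obtain ⟨i, -, -, rfl, -⟩ := h
  exact List.get_mem tr i

lemma trOrder.mem_right (h : trOrder tr x y) : y ∈ tr := by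
  obtain ⟨-, j, -, -, rfl⟩ := h
  exact List.get_mem tr j

lemma trOrder.trans (hnd : tr.Nodup) (hxy : trOrder tr x y) (hyz : trOrder tr y z) :
    trOrder tr x z := by
  obtain ⟨i, j, hij, hx, rfl⟩ := hxy
  obtain ⟨j', k, hjk, hj', hz⟩ := hyz
  obtain rfl : j = j' := (hnd.get_inj_iff).mp hj'.symm
  exact ⟨i, k, hij.trans hjk, hx, hz⟩

lemma trOrder_irrefl (hnd : tr.Nodup) : ¬ trOrder tr x x := by
  rintro ⟨i, j, hij, hi, hj⟩
  exact hij.ne ((hnd.get_inj_iff).mp (hi.trans hj.symm))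

lemma trOrder_total_s14 (hx : x ∈ tr) (hy : y ∈ tr) (hne : x ≠ y) :
    trOrder tr x y ∨ trOrder tr y x := by
  obtain ⟨i, rfl⟩ := List.mem_iff_get.mp hx
  obtain ⟨j, rfl⟩ := List.mem_iff_get.mp hy
  rcases lt_trichotomy i j with h | rfl | h
  · exact Or.inl ⟨i, j, h, rfl, rfl⟩
  · exact absurd rfl hne
  · exact Or.inr ⟨j, i, h, rfl, rfl⟩

end TraceOrder

namespace MatchingRelease

variable {tr : Trace} {a r : Event}

lemma acquire_op {m : ℕ} (h : MatchingRelease tr a r) (hr : r.op = Op.release m) :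
    a.op = Op.acquire m := by
  obtain ⟨m', ha, hr', -⟩ := h
  rw [hr, Op.release.injEq] at hr'
  rwa [hr']

lemma unique {r' : Event} (h : MatchingRelease tr a r)
    (h' : MatchingRelease tr a r') : r = r' := by
  obtain ⟨m, ha, hr, -, har, hmin⟩ := h
  obtain ⟨m', ha', hr', -, har', hmin'⟩ := h'
  obtain rfl : m = m' := by rw [ha, Op.acquire.injEq] at ha'; exact ha'
  by_contra hne
  rcases trOrder_total_s14 (trOrder.mem_right har) (trOrder.mem_right har') hne with h | h
  · exact hmin' r hr har h
  · exact hmin r' hr' har' h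

end MatchingRelease

lemma InCS.exists_PO_of_isAccess {tr : Trace} {r e : Event} {x : ℕ} (h : InCS tr r e)
    (hx : isAccess e x) : ∃ a, MatchingRelease tr a r ∧ PO tr a e ∧ PO tr e r := by
  obtain ⟨a, hmr, rfl | rfl | ⟨hae, her, htid⟩⟩ := h
  · obtain ⟨m, ha, -⟩ := hmr
    rcases hx with hx | hx <;> simp [ha] at hx
  · obtain ⟨m, -, hr, -⟩ := hmr
    rcases hx with hx | hx <;> simp [hr] at hx
  · obtain ⟨-, -, -, hrtid, -⟩ := id hmr
    exact ⟨a, hmr, ⟨hae, htid.symm⟩, her, htid.trans hrtid.symm⟩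

namespace Predictable

variable {dep : Event → Event → Prop} {tr tr' : Trace} {x y : Event}

lemma trOrder_of_PO (hpred : Predictable dep tr tr') (hxy : PO tr x y) (hy : y ∈ tr') :
    trOrder tr' x y :=
  (hpred.po_rule x y hxy).resolve_right (not_not.mpr hy)

lemma mem_of_PO (hpred : Predictable dep tr tr') (hxy : PO tr x y) (hy : y ∈ tr') : x ∈ tr' :=
  (hpred.trOrder_of_PO hxy hy).mem_left

lemma critical_sections_ordered (hpred : Predictable dep tr tr')
    {a1 a2 r1 r2 : Event} {m : ℕ} (ha1 : a1.op = Op.acquire m) (ha2 : a2.op = Op.acquire m)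
    (h1 : MatchingRelease tr a1 r1) (h2 : MatchingRelease tr a2 r2)
    (ha1' : a1 ∈ tr') (ha2' : a2 ∈ tr') (hne : a1 ≠ a2) :
    (trOrder tr' a1 r1 ∧ trOrder tr' r1 a2) ∨ (trOrder tr' a2 r2 ∧ trOrder tr' r2 a1) := by
  rcases trOrder_total_s14 ha1' ha2' hne with h | h
  · obtain ⟨r, hr, hr'⟩ := hpred.ls_rule a1 a2 m ha1 ha2 h
    exact Or.inl (hr.unique h1 ▸ hr')
  · obtain ⟨r, hr, hr'⟩ := hpred.ls_rule a2 a1 m ha2 ha1 h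
    exact Or.inr (hr.unique h2 ▸ hr')

end Predictable

theorem stmt14_general (tr : Trace) (hnd : tr.Nodup)
    (dep : Event → Event → Prop) (r1 r2 e e' b : Event) (m : ℕ)
    (hr1 : r1.op = Op.release m) (hr2 : r2.op = Op.release m)
    (h12 : trOrder tr r1 r2)
    (he : InCS tr r1 e) (he' : InCS tr r2 e')
    (hlw : LastWr tr e' e)
    (hb : b.op = Op.branch) (hpb : PO tr e' b) (hdep : dep b e') :
    ∀ tr', tr'.Nodup → Predictable dep tr tr' → b ∈ tr' →
      r1 ∈ tr' ∧
      (∃ a1, MatchingRelease tr a1 r1 ∧ trOrder tr' a1 e' ∧ trOrder tr' r1 e') ∧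
      (∀ w, LastWr tr' e' w ↔ LastWr tr e' w) := by
  intro tr' hnd' hpred hb'
  have he'mem : e' ∈ tr' := hpred.mem_of_PO hpb hb'
  obtain ⟨x, hxe', hxe, -⟩ := id hlw
  have hlw' := hpred.lw_rule e' he'mem (.branch e' b ⟨x, hxe'⟩ hb' hb hpb hdep)
  obtain ⟨-, -, -, hee', -⟩ := (hlw' e).mpr hlw
  obtain ⟨a1, hma1, ha1e, -⟩ := he.exists_PO_of_isAccess (Or.inl hxe)
  obtain ⟨a2, hma2, ha2e', he'r2⟩ := he'.exists_PO_of_isAccess (Or.inr hxe')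
  have ha1e' : trOrder tr' a1 e' := (hpred.trOrder_of_PO ha1e hee'.mem_left).trans hnd' hee'
  have ha2e' : trOrder tr' a2 e' := hpred.trOrder_of_PO ha2e' he'mem
  have hne : a1 ≠ a2 := by
    rintro rfl
    exact trOrder_irrefl hnd (hma1.unique hma2 ▸ h12)
  rcases hpred.critical_sections_ordered (hma1.acquire_op hr1) (hma2.acquire_op hr2) hma1
      hma2 ha1e'.mem_left ha2e'.mem_left hne with ⟨-, hr1a2⟩ | ⟨-, hr2a1⟩
  · have hr1e' := hr1a2.trans hnd' ha2e'
    exact ⟨hr1e'.mem_left, ⟨a1, hma1, ha1e', hr1e'⟩, hlw'⟩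
  · have he'r2' := hpred.trOrder_of_PO he'r2 hr2a1.mem_left
    exact absurd ((he'r2'.trans hnd' hr2a1).trans hnd' ha1e') (trOrder_irrefl hnd')

/-- Base case via conflicting critical sections: if a write in `CS(r1)` is the last
writer in `tr` of a read `e'` in a later same-lock `CS(r2)`, and a branch `b`
PO-follows and depends on `e'`, then any predictable trace containing `b` contains
`r1` and the acquire matching `r1` before `e'`, and preserves `e'`'s last writer. -/
theorem stmt14 (tr : Trace) (hwf : WellFormed tr) (hnd : tr.Nodup)
    (dep : Event → Event → Prop) (r1 r2 e e' b : Event) (m : ℕ)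
    (hr1 : r1.op = Op.release m) (hr2 : r2.op = Op.release m)
    (h12 : trOrder tr r1 r2)
    (he : InCS tr r1 e) (he' : InCS tr r2 e')
    (hlw : LastWr tr e' e)
    (hb : b.op = Op.branch) (hpb : PO tr e' b) (hdep : dep b e') :
    ∀ tr', tr'.Nodup → Predictable dep tr tr' → b ∈ tr' →
      r1 ∈ tr' ∧
      (∃ a1, MatchingRelease tr a1 r1 ∧ trOrder tr' a1 e' ∧ trOrder tr' r1 e') ∧
      (∀ w, LastWr tr' e' w ↔ LastWr tr e' w) :=
  stmt14_general tr hnd dep r1 r2 e e' b m hr1 hr2 h12 he he' hlw hb hpb hdep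
end
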